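/- Let p, q ∈ [0,1] and let ν be the pushforward of μ_{p,q} under the map (S,T) ↦ collapse(S,T), a probability measure on configurations on ℤ. Let E be the event that site 0 is empty. Then, conditioned on E, the configuration restricted to the positive sites is independent of the configuration restricted to the negative sites: for every event A determined by the coordinates at sites {1, 2, 3, …} and every event B determined by the coordinates at sites {…, −3, −2, −1}, ν(A ∩ B ∩ E) · ν(E) = ν(A ∩ E) · ν(B ∩ E). -/

import Mathlib

open scoped Classical ENNReal
open MeasureTheory

/-- A site of ℤ is occupied by a particle, an anti-particle, or is empty. -/
inductive Site where
  | particle : Site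
  | anti : Site
  | empty : Site
deriving DecidableEq

instance : MeasurableSpace Site := ⊤

/-- Site `a` carries a particle in the collapse of (S, T) (subsets of ℤ encoded as
`ℤ → Bool`): `a ∉ T` and there is some `b ≥ a` with
`|[a,b] ∩ S| + |[a,b] ∩ T| ≥ b − a + 1`. -/
def HasParticleZ (S T : ℤ → Bool) (a : ℤ) : Prop :=
  T a = false ∧ ∃ b : ℤ, a ≤ b ∧
    (Finset.Icc a b).card ≤
      ((Finset.Icc a b).filter fun n => S n = true).card +
        ((Finset.Icc a b).filter fun n => T n = true).card

/-- The collapse of (S, T) on ℤ: anti-particles exactly at T, particles at the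
sites described by `HasParticleZ`, every other site empty. -/
noncomputable def collapseZ (S T : ℤ → Bool) : ℤ → Site := fun a =>
  if T a = true then Site.anti
  else if HasParticleZ S T a then Site.particle
  else Site.empty

/-- ν: the pushforward of μ under (S, T) ↦ collapse(S, T), a measure on
configurations on ℤ. -/
noncomputable def nu (μ : Measure ((ℤ → Bool) × (ℤ → Bool))) : Measure (ℤ → Site) :=
  Measure.map (fun ω : (ℤ → Bool) × (ℤ → Bool) => collapseZ ω.1 ω.2) μ

/-- count of a boolean function on Icc a b -/
noncomputable def cnt (S : ℤ → Bool) (a b : ℤ) : ℕ := ((Finset.Icc a b).filter fun n => S n = true).card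

lemma cnt_congr {S S' : ℤ → Bool} {a b : ℤ} (h : ∀ n, a ≤ n → n ≤ b → S n = S' n) :
    cnt S a b = cnt S' a b := by
  unfold cnt
  congr 1
  apply Finset.filter_congr
  intro n hn
  rw [Finset.mem_Icc] at hn
  rw [h n hn.1 hn.2]

lemma Icc_split {a b : ℤ} (ha : a ≤ -1) (hb : 0 ≤ b) :
    Finset.Icc a b = Finset.Icc a (-1) ∪ Finset.Icc 0 b := by
  ext n
  simp only [Finset.mem_Icc, Finset.mem_union]
  omega

lemma Icc_disj {a b : ℤ} : Disjoint (Finset.Icc a (-1)) (Finset.Icc 0 b) := by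
  rw [Finset.disjoint_left]
  intro n hn hn'
  rw [Finset.mem_Icc] at hn hn'
  omega

lemma cnt_split {S : ℤ → Bool} {a b : ℤ} (ha : a ≤ -1) (hb : 0 ≤ b) :
    cnt S a b = cnt S a (-1) + cnt S 0 b := by
  unfold cnt
  rw [Icc_split ha hb, Finset.filter_union, Finset.card_union_of_disjoint]
  exact Finset.disjoint_filter_filter Icc_disj

lemma card_split {a b : ℤ} (ha : a ≤ -1) (hb : 0 ≤ b) :
    (Finset.Icc a b).card = (Finset.Icc a (-1)).card + (Finset.Icc 0 b).card := by
  rw [Icc_split ha hb, Finset.card_union_of_disjoint Icc_disj]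

lemma hasParticle_iff_cnt (S T : ℤ → Bool) (a : ℤ) :
    HasParticleZ S T a ↔ T a = false ∧ ∃ b : ℤ, a ≤ b ∧
      (Finset.Icc a b).card ≤ cnt S a b + cnt T a b := Iff.rfl

/-- collapse at `a` only depends on coordinates in `[a, ∞)` -/
lemma collapse_congr {S T S' T' : ℤ → Bool} {a : ℤ}
    (hS : ∀ n, a ≤ n → S n = S' n) (hT : ∀ n, a ≤ n → T n = T' n) :
    collapseZ S T a = collapseZ S' T' a := by
  have hH : HasParticleZ S T a ↔ HasParticleZ S' T' a := by
    rw [hasParticle_iff_cnt, hasParticle_iff_cnt, hT a le_rfl]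
    refine and_congr Iff.rfl (exists_congr fun b => and_congr Iff.rfl ?_)
    constructor <;> intro h
    · rwa [cnt_congr (fun n hn _ => (hS n hn).symm), cnt_congr (fun n hn _ => (hT n hn).symm)]
    · rwa [cnt_congr (fun n hn _ => hS n hn), cnt_congr (fun n hn _ => hT n hn)]
  unfold collapseZ
  rw [hT a le_rfl]
  by_cases h : T' a = true
  · simp [h]
  · simp [h, hH]

/-- the hole condition at 0 -/
lemma hole_iff (S T : ℤ → Bool) :
    collapseZ S T 0 = Site.empty ↔ ∀ b : ℤ, 0 ≤ b → cnt S 0 b + cnt T 0 b < (Finset.Icc 0 b).card := by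
  unfold collapseZ
  constructor
  · intro h b hb
    by_contra hc
    push_neg at hc
    by_cases hT : T 0 = true
    · simp [hT] at h
    · have hp : HasParticleZ S T 0 := ⟨by simpa using hT, b, hb, hc⟩
      simp [hT, hp] at h
  · intro h
    have hT : T 0 = false := by
      by_contra hT
      have hT' : T 0 = true := by simpa using hT
      have := h 0 le_rfl
      have h1 : cnt T 0 0 = 1 := by
        simp [cnt, Finset.Icc_self, Finset.filter_singleton, hT']
      simp [h1, Finset.Icc_self] at this
    have hnp : ¬ HasParticleZ S T 0 := by
      rintro ⟨-, b, hb, hc⟩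
      exact absurd hc (not_le.2 (h b hb))
    simp [hT, hnp]

def truncNeg (f : ℤ → Bool) : ℤ → Bool := fun n => if n < 0 then f n else false

/-- Key lemma: given the hole at 0, the collapse at negative sites agrees with that of
the negatively-truncated configuration. -/
lemma collapse_neg_eq {S T : ℤ → Bool} (h0 : collapseZ S T 0 = Site.empty)
    {a : ℤ} (ha : a < 0) :
    collapseZ S T a = collapseZ (truncNeg S) (truncNeg T) a := by
  have hole := (hole_iff S T).1 h0
  have hTa : truncNeg T a = T a := if_pos ha
  have hSagree : ∀ n, a ≤ n → n ≤ -1 → S n = truncNeg S n := by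
    intro n _ hn; simp [truncNeg, show n < 0 by omega]
  have hTagree : ∀ n, a ≤ n → n ≤ -1 → T n = truncNeg T n := by
    intro n _ hn; simp [truncNeg, show n < 0 by omega]
  have hH : HasParticleZ S T a ↔ HasParticleZ (truncNeg S) (truncNeg T) a := by
    rw [hasParticle_iff_cnt, hasParticle_iff_cnt, hTa]
    refine and_congr Iff.rfl ?_
    constructor
    · rintro ⟨b, hab, hb⟩
      by_cases hbneg : b ≤ -1
      · exact ⟨b, hab, by
          rwa [← cnt_congr (fun n h1 h2 => hSagree n h1 (h2.trans hbneg)),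
            ← cnt_congr (fun n h1 h2 => hTagree n h1 (h2.trans hbneg))]⟩
      · push_neg at hbneg
        have hb0 : 0 ≤ b := by omega
        have ha1 : a ≤ -1 := by omega
        have hsplitS := cnt_split (S := S) ha1 hb0
        have hsplitT := cnt_split (S := T) ha1 hb0
        have hcsplit := card_split (a := a) (b := b) ha1 hb0
        have hhole := hole b hb0
        refine ⟨-1, ha1, ?_⟩
        rw [← cnt_congr (fun n h1 h2 => hSagree n h1 h2),
          ← cnt_congr (fun n h1 h2 => hTagree n h1 h2)]
        omega
    · rintro ⟨b, hab, hb⟩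
      by_cases hbneg : b ≤ -1
      · exact ⟨b, hab, by
          rwa [cnt_congr (fun n h1 h2 => hSagree n h1 (h2.trans hbneg)),
            cnt_congr (fun n h1 h2 => hTagree n h1 (h2.trans hbneg))]⟩
      · push_neg at hbneg
        have hb0 : 0 ≤ b := by omega
        have ha1 : a ≤ -1 := by omega
        have hS0 : cnt (truncNeg S) 0 b = 0 := by
          unfold cnt
          rw [Finset.card_eq_zero, Finset.filter_eq_empty_iff]
          intro n hn
          rw [Finset.mem_Icc] at hn
          simp [truncNeg, show ¬ n < 0 by omega]
        have hT0 : cnt (truncNeg T) 0 b = 0 := by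
          unfold cnt
          rw [Finset.card_eq_zero, Finset.filter_eq_empty_iff]
          intro n hn
          rw [Finset.mem_Icc] at hn
          simp [truncNeg, show ¬ n < 0 by omega]
        have hsplitS := cnt_split (S := truncNeg S) ha1 hb0
        have hsplitT := cnt_split (S := truncNeg T) ha1 hb0
        have hcsplit := card_split (a := a) (b := b) ha1 hb0
        refine ⟨-1, ha1, ?_⟩
        rw [cnt_congr (fun n h1 h2 => hSagree n h1 h2),
          cnt_congr (fun n h1 h2 => hTagree n h1 h2)]
        omega
  unfold collapseZ
  rw [hTa]
  by_cases h : T a = true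
  · simp [h]
  · simp [h, hH]

/-- measurability of the collapse map -/
lemma measurable_collapse : Measurable (fun ω : (ℤ → Bool) × (ℤ → Bool) => collapseZ ω.1 ω.2) := by
  rw [measurable_pi_iff]
  intro a
  have hT : ∀ n : ℤ, Measurable fun ω : (ℤ → Bool) × (ℤ → Bool) => ω.2 n :=
    fun n => (measurable_pi_apply n).comp measurable_snd
  have hS : ∀ n : ℤ, Measurable fun ω : (ℤ → Bool) × (ℤ → Bool) => ω.1 n :=
    fun n => (measurable_pi_apply n).comp measurable_fst
  have hTset : ∀ n : ℤ, MeasurableSet {ω : (ℤ → Bool) × (ℤ → Bool) | ω.2 n = true} :=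
    fun n => (hT n) (by trivial : MeasurableSet {true})
  have hcnt : ∀ b : ℤ, Measurable fun ω : (ℤ → Bool) × (ℤ → Bool) =>
      cnt ω.1 a b + cnt ω.2 a b := by
    intro b
    have h1 : (fun ω : (ℤ → Bool) × (ℤ → Bool) => cnt ω.1 a b + cnt ω.2 a b) =
        fun ω => (∑ n ∈ Finset.Icc a b, ((if ω.1 n = true then 1 else 0) +
          (if ω.2 n = true then 1 else 0))) := by
      funext ω
      rw [Finset.sum_add_distrib]
      unfold cnt
      rw [Finset.card_filter, Finset.card_filter]
    rw [h1]
    apply Finset.measurable_sum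
    intro n _
    apply Measurable.add
    · exact Measurable.ite ((hS n) (by trivial : MeasurableSet {true})) measurable_const
        measurable_const
    · exact Measurable.ite ((hT n) (by trivial : MeasurableSet {true})) measurable_const
        measurable_const
  have hHP : MeasurableSet {ω : (ℤ → Bool) × (ℤ → Bool) | HasParticleZ ω.1 ω.2 a} := by
    have : {ω : (ℤ → Bool) × (ℤ → Bool) | HasParticleZ ω.1 ω.2 a} =
        {ω | ω.2 a = false} ∩ ⋃ b : ℤ, {ω : (ℤ → Bool) × (ℤ → Bool) |
          a ≤ b ∧ (Finset.Icc a b).card ≤ cnt ω.1 a b + cnt ω.2 a b} := by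
      ext ω
      simp only [Set.mem_setOf_eq, Set.mem_inter_iff, Set.mem_iUnion, HasParticleZ]
      rfl
    rw [this]
    refine MeasurableSet.inter ?_ (MeasurableSet.iUnion fun b => ?_)
    · have h := (hT a) (by trivial : MeasurableSet {false})
      have heq : {ω : (ℤ → Bool) × (ℤ → Bool) | ω.2 a = false} =
          (fun ω : (ℤ → Bool) × (ℤ → Bool) => ω.2 a) ⁻¹' {false} := by ext ω; simp
      rw [heq]; exact h
    · by_cases hab : a ≤ b
      · have : {ω : (ℤ → Bool) × (ℤ → Bool) |
            a ≤ b ∧ (Finset.Icc a b).card ≤ cnt ω.1 a b + cnt ω.2 a b} =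
            (fun ω : (ℤ → Bool) × (ℤ → Bool) => cnt ω.1 a b + cnt ω.2 a b) ⁻¹'
              (Set.Ici (Finset.Icc a b).card) := by
          ext ω; simp [hab]
        rw [this]
        exact (hcnt b) measurableSet_Ici
      · have : {ω : (ℤ → Bool) × (ℤ → Bool) |
            a ≤ b ∧ (Finset.Icc a b).card ≤ cnt ω.1 a b + cnt ω.2 a b} = ∅ := by
          ext ω; simp [hab]
        rw [this]
        exact MeasurableSet.empty
  have : (fun ω : (ℤ → Bool) × (ℤ → Bool) => collapseZ ω.1 ω.2 a) =
      fun ω => if ω.2 a = true then Site.anti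
        else if HasParticleZ ω.1 ω.2 a then Site.particle else Site.empty := rfl
  rw [this]
  exact Measurable.ite (hTset a) measurable_const
    (Measurable.ite hHP measurable_const measurable_const)

/-! ### Cylinder sets and independence -/

def cylSet (E F : Finset ℤ) (f g : ℤ → Bool) : Set ((ℤ → Bool) × (ℤ → Bool)) :=
  {ω | (∀ n ∈ E, ω.1 n = f n) ∧ (∀ n ∈ F, ω.2 n = g n)}

def cyls (I : Set ℤ) : Set (Set ((ℤ → Bool) × (ℤ → Bool))) :=
  {C | ∃ E F : Finset ℤ, ∃ f g : ℤ → Bool, ↑E ⊆ I ∧ ↑F ⊆ I ∧ C = cylSet E F f g}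

lemma measurableSet_cylSet (E F : Finset ℤ) (f g : ℤ → Bool) :
    MeasurableSet (cylSet E F f g) := by
  have : cylSet E F f g = (⋂ n ∈ (E : Set ℤ), {ω : (ℤ → Bool) × (ℤ → Bool) | ω.1 n = f n}) ∩
      (⋂ n ∈ (F : Set ℤ), {ω : (ℤ → Bool) × (ℤ → Bool) | ω.2 n = g n}) := by
    ext ω; simp [cylSet]
  rw [this]
  refine MeasurableSet.inter ?_ ?_
  · refine MeasurableSet.biInter E.countable_toSet fun n _ => ?_
    have h : MeasurableSet ((fun ω : (ℤ → Bool) × (ℤ → Bool) => ω.1 n) ⁻¹' {f n}) :=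
      ((measurable_pi_apply n).comp measurable_fst) (by trivial)
    have heq : {ω : (ℤ → Bool) × (ℤ → Bool) | ω.1 n = f n} =
        (fun ω : (ℤ → Bool) × (ℤ → Bool) => ω.1 n) ⁻¹' {f n} := by ext ω; simp
    rw [heq]; exact h
  · refine MeasurableSet.biInter F.countable_toSet fun n _ => ?_
    have h : MeasurableSet ((fun ω : (ℤ → Bool) × (ℤ → Bool) => ω.2 n) ⁻¹' {g n}) :=
      ((measurable_pi_apply n).comp measurable_snd) (by trivial)
    have heq : {ω : (ℤ → Bool) × (ℤ → Bool) | ω.2 n = g n} =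
        (fun ω : (ℤ → Bool) × (ℤ → Bool) => ω.2 n) ⁻¹' {g n} := by ext ω; simp
    rw [heq]; exact h

lemma cylSet_inter {E₁ F₁ E₂ F₂ : Finset ℤ} {f₁ g₁ f₂ g₂ : ℤ → Bool}
    (hne : (cylSet E₁ F₁ f₁ g₁ ∩ cylSet E₂ F₂ f₂ g₂).Nonempty) :
    cylSet E₁ F₁ f₁ g₁ ∩ cylSet E₂ F₂ f₂ g₂ =
      cylSet (E₁ ∪ E₂) (F₁ ∪ F₂) (fun n => if n ∈ E₁ then f₁ n else f₂ n)
        (fun n => if n ∈ F₁ then g₁ n else g₂ n) := by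
  obtain ⟨ω₀, ⟨hA1, hB1⟩, ⟨hA2, hB2⟩⟩ := hne
  ext ω
  simp only [cylSet, Set.mem_inter_iff, Set.mem_setOf_eq, Finset.mem_union]
  constructor
  · rintro ⟨⟨h1, h2⟩, ⟨h3, h4⟩⟩
    constructor
    · intro n hn
      by_cases hn1 : n ∈ E₁
      · simp [hn1, h1 n hn1]
      · rcases hn with hn | hn
        · exact absurd hn hn1
        · simp [hn1, h3 n hn]
    · intro n hn
      by_cases hn1 : n ∈ F₁
      · simp [hn1, h2 n hn1]
      · rcases hn with hn | hn
        · exact absurd hn hn1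
        · simp [hn1, h4 n hn]
  · rintro ⟨h1, h2⟩
    refine ⟨⟨fun n hn => ?_, fun n hn => ?_⟩, ⟨fun n hn => ?_, fun n hn => ?_⟩⟩
    · have := h1 n (Or.inl hn); simpa [hn] using this
    · have := h2 n (Or.inl hn); simpa [hn] using this
    · have := h1 n (Or.inr hn)
      by_cases hn1 : n ∈ E₁
      · rw [this, if_pos hn1]
        rw [← hA1 n hn1, hA2 n hn]
      · rwa [if_neg hn1] at this
    · have := h2 n (Or.inr hn)
      by_cases hn1 : n ∈ F₁
      · rw [this, if_pos hn1]
        rw [← hB1 n hn1, hB2 n hn]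
      · rwa [if_neg hn1] at this

lemma isPiSystem_cyls (I : Set ℤ) : IsPiSystem (cyls I) := by
  rintro s ⟨E₁, F₁, f₁, g₁, hE₁, hF₁, rfl⟩ t ⟨E₂, F₂, f₂, g₂, hE₂, hF₂, rfl⟩ hne
  rw [cylSet_inter hne]
  exact ⟨E₁ ∪ E₂, F₁ ∪ F₂, _, _, by
    rw [Finset.coe_union]; exact Set.union_subset hE₁ hE₂, by
    rw [Finset.coe_union]; exact Set.union_subset hF₁ hF₂, rfl⟩

/-! ### Independence of the two families of cylinder sets -/

lemma indepSets_cyls (p q : ℝ≥0∞) (μ : Measure ((ℤ → Bool) × (ℤ → Bool)))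
    (hμ : ∀ (E F : Finset ℤ) (f g : ℤ → Bool),
      μ {ω | (∀ n ∈ E, ω.1 n = f n) ∧ (∀ n ∈ F, ω.2 n = g n)} =
        (∏ n ∈ E, if f n then p else 1 - p) * ∏ n ∈ F, if g n then q else 1 - q) :
    ProbabilityTheory.IndepSets (cyls {n : ℤ | 0 ≤ n}) (cyls {n : ℤ | n < 0}) μ := by
  have hμ' : ∀ (E F : Finset ℤ) (f g : ℤ → Bool),
      μ (cylSet E F f g) =
        (∏ n ∈ E, if f n then p else 1 - p) * ∏ n ∈ F, if g n then q else 1 - q := hμ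
  rw [ProbabilityTheory.IndepSets_iff]
  rintro s t ⟨E₁, F₁, f₁, g₁, hE₁, hF₁, rfl⟩ ⟨E₂, F₂, f₂, g₂, hE₂, hF₂, rfl⟩
  have hdE : Disjoint E₁ E₂ := by
    rw [Finset.disjoint_left]
    intro n hn hn'
    have h1 := hE₁ hn
    have h2 := hE₂ hn'
    simp only [Set.mem_setOf_eq] at h1 h2
    omega
  have hdF : Disjoint F₁ F₂ := by
    rw [Finset.disjoint_left]
    intro n hn hn'
    have h1 := hF₁ hn
    have h2 := hF₂ hn'
    simp only [Set.mem_setOf_eq] at h1 h2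
    omega
  set f' : ℤ → Bool := fun n => if n ∈ E₁ then f₁ n else f₂ n with hf'
  set g' : ℤ → Bool := fun n => if n ∈ F₁ then g₁ n else g₂ n with hg'
  have hne : (cylSet E₁ F₁ f₁ g₁ ∩ cylSet E₂ F₂ f₂ g₂).Nonempty := by
    refine ⟨(f', g'), ⟨fun n hn => ?_, fun n hn => ?_⟩, ⟨fun n hn => ?_, fun n hn => ?_⟩⟩
    · simp [hf', hn]
    · simp [hg', hn]
    · simp [hf', Finset.disjoint_right.1 hdE hn]
    · simp [hg', Finset.disjoint_right.1 hdF hn]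
  rw [cylSet_inter hne, hμ', hμ', hμ']
  have hEprod : (∏ n ∈ E₁ ∪ E₂, if f' n then p else 1 - p) =
      (∏ n ∈ E₁, if f₁ n then p else 1 - p) * ∏ n ∈ E₂, if f₂ n then p else 1 - p := by
    rw [Finset.prod_union hdE]
    congr 1
    · exact Finset.prod_congr rfl fun n hn => by simp [hf', hn]
    · exact Finset.prod_congr rfl fun n hn => by
        simp [hf', Finset.disjoint_right.1 hdE hn]
  have hFprod : (∏ n ∈ F₁ ∪ F₂, if g' n then q else 1 - q) =
      (∏ n ∈ F₁, if g₁ n then q else 1 - q) * ∏ n ∈ F₂, if g₂ n then q else 1 - q := by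
    rw [Finset.prod_union hdF]
    congr 1
    · exact Finset.prod_congr rfl fun n hn => by simp [hg', hn]
    · exact Finset.prod_congr rfl fun n hn => by
        simp [hg', Finset.disjoint_right.1 hdF hn]
  rw [hEprod, hFprod]
  exact mul_mul_mul_comm _ _ _ _

/-! ### Truncation maps -/

def truncNonneg (f : ℤ → Bool) : ℤ → Bool := fun n => if 0 ≤ n then f n else false

def tPlus : (ℤ → Bool) × (ℤ → Bool) → (ℤ → Bool) × (ℤ → Bool) :=
  fun ω => (truncNonneg ω.1, truncNonneg ω.2)

def tMinus : (ℤ → Bool) × (ℤ → Bool) → (ℤ → Bool) × (ℤ → Bool) :=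
  fun ω => (truncNeg ω.1, truncNeg ω.2)

lemma measurable_truncNeg_comp {pr : ((ℤ → Bool) × (ℤ → Bool)) → (ℤ → Bool)}
    (hpr : Measurable pr) : Measurable fun ω => truncNeg (pr ω) := by
  rw [measurable_pi_iff]
  intro n
  have h : (fun ω => truncNeg (pr ω) n) =
      fun ω : (ℤ → Bool) × (ℤ → Bool) => if n < 0 then pr ω n else false := rfl
  rw [h]
  by_cases hn : n < 0
  · simp only [if_pos hn]
    exact (measurable_pi_apply n).comp hpr
  · simp only [if_neg hn]
    exact measurable_const

lemma measurable_tMinus : Measurable tMinus :=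
  (measurable_truncNeg_comp measurable_fst).prodMk (measurable_truncNeg_comp measurable_snd)

/-- `tPlus` is measurable w.r.t. the σ-algebra generated by the nonnegative cylinders. -/
lemma tPlus_measurable_gen :
    @Measurable _ _ (MeasurableSpace.generateFrom (cyls {n : ℤ | 0 ≤ n})) _ tPlus := by
  set m := MeasurableSpace.generateFrom (cyls {n : ℤ | 0 ≤ n}) with hm
  have hfst : ∀ (n : ℤ) (v : Bool), 0 ≤ n →
      MeasurableSet[m] {ω : (ℤ → Bool) × (ℤ → Bool) | ω.1 n = v} := by
    intro n v hn
    apply MeasurableSpace.measurableSet_generateFrom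
    refine ⟨{n}, ∅, fun _ => v, fun _ => v, ?_, ?_, ?_⟩
    · intro x hx
      simp only [Finset.coe_singleton, Set.mem_singleton_iff] at hx
      simpa [hx] using hn
    · simp
    · ext ω; simp [cylSet]
  have hsnd : ∀ (n : ℤ) (v : Bool), 0 ≤ n →
      MeasurableSet[m] {ω : (ℤ → Bool) × (ℤ → Bool) | ω.2 n = v} := by
    intro n v hn
    apply MeasurableSpace.measurableSet_generateFrom
    refine ⟨∅, {n}, fun _ => v, fun _ => v, ?_, ?_, ?_⟩
    · simp
    · intro x hx
      simp only [Finset.coe_singleton, Set.mem_singleton_iff] at hx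
      simpa [hx] using hn
    · ext ω; simp [cylSet]
  refine Measurable.prod ?_ ?_
  · rw [@measurable_pi_iff _ _ _ m]
    intro n
    by_cases hn : 0 ≤ n
    · refine @measurable_to_countable' Bool _ _ _ m _ fun v => ?_
      have heq : (fun ω : (ℤ → Bool) × (ℤ → Bool) => (tPlus ω).1 n) ⁻¹' {v} =
          {ω : (ℤ → Bool) × (ℤ → Bool) | ω.1 n = v} := by
        ext ω; simp [tPlus, truncNonneg, if_pos hn]
      rw [heq]; exact hfst n v hn
    · have h : (fun ω : (ℤ → Bool) × (ℤ → Bool) => (tPlus ω).1 n) = fun _ => false := by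
        funext ω; simp [tPlus, truncNonneg, hn]
      rw [h]; exact @measurable_const _ _ _ m _
  · rw [@measurable_pi_iff _ _ _ m]
    intro n
    by_cases hn : 0 ≤ n
    · refine @measurable_to_countable' Bool _ _ _ m _ fun v => ?_
      have heq : (fun ω : (ℤ → Bool) × (ℤ → Bool) => (tPlus ω).2 n) ⁻¹' {v} =
          {ω : (ℤ → Bool) × (ℤ → Bool) | ω.2 n = v} := by
        ext ω; simp [tPlus, truncNonneg, if_pos hn]
      rw [heq]; exact hsnd n v hn
    · have h : (fun ω : (ℤ → Bool) × (ℤ → Bool) => (tPlus ω).2 n) = fun _ => false := by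
        funext ω; simp [tPlus, truncNonneg, hn]
      rw [h]; exact @measurable_const _ _ _ m _

/-- `tMinus` is measurable w.r.t. the σ-algebra generated by the negative cylinders. -/
lemma tMinus_measurable_gen :
    @Measurable _ _ (MeasurableSpace.generateFrom (cyls {n : ℤ | n < 0})) _ tMinus := by
  set m := MeasurableSpace.generateFrom (cyls {n : ℤ | n < 0}) with hm
  have hfst : ∀ (n : ℤ) (v : Bool), n < 0 →
      MeasurableSet[m] {ω : (ℤ → Bool) × (ℤ → Bool) | ω.1 n = v} := by
    intro n v hn
    apply MeasurableSpace.measurableSet_generateFrom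
    refine ⟨{n}, ∅, fun _ => v, fun _ => v, ?_, ?_, ?_⟩
    · intro x hx
      simp only [Finset.coe_singleton, Set.mem_singleton_iff] at hx
      simpa [hx] using hn
    · simp
    · ext ω; simp [cylSet]
  have hsnd : ∀ (n : ℤ) (v : Bool), n < 0 →
      MeasurableSet[m] {ω : (ℤ → Bool) × (ℤ → Bool) | ω.2 n = v} := by
    intro n v hn
    apply MeasurableSpace.measurableSet_generateFrom
    refine ⟨∅, {n}, fun _ => v, fun _ => v, ?_, ?_, ?_⟩
    · simp
    · intro x hx
      simp only [Finset.coe_singleton, Set.mem_singleton_iff] at hx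
      simpa [hx] using hn
    · ext ω; simp [cylSet]
  refine Measurable.prod ?_ ?_
  · rw [@measurable_pi_iff _ _ _ m]
    intro n
    by_cases hn : n < 0
    · refine @measurable_to_countable' Bool _ _ _ m _ fun v => ?_
      have heq : (fun ω : (ℤ → Bool) × (ℤ → Bool) => (tMinus ω).1 n) ⁻¹' {v} =
          {ω : (ℤ → Bool) × (ℤ → Bool) | ω.1 n = v} := by
        ext ω; simp [tMinus, truncNeg, if_pos hn]
      rw [heq]; exact hfst n v hn
    · have h : (fun ω : (ℤ → Bool) × (ℤ → Bool) => (tMinus ω).1 n) = fun _ => false := by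
        funext ω; simp [tMinus, truncNeg, hn]
      rw [h]; exact @measurable_const _ _ _ m _
  · rw [@measurable_pi_iff _ _ _ m]
    intro n
    by_cases hn : n < 0
    · refine @measurable_to_countable' Bool _ _ _ m _ fun v => ?_
      have heq : (fun ω : (ℤ → Bool) × (ℤ → Bool) => (tMinus ω).2 n) ⁻¹' {v} =
          {ω : (ℤ → Bool) × (ℤ → Bool) | ω.2 n = v} := by
        ext ω; simp [tMinus, truncNeg, if_pos hn]
      rw [heq]; exact hsnd n v hn
    · have h : (fun ω : (ℤ → Bool) × (ℤ → Bool) => (tMinus ω).2 n) = fun _ => false := by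
        funext ω; simp [tMinus, truncNeg, hn]
      rw [h]; exact @measurable_const _ _ _ m _


/-- Let (S, T) ~ μ_{p,q} and ν the law of collapse(S,T).  Conditioned on the event
E that site 0 is empty, the configuration on the positive sites is independent of
the configuration on the negative sites:
ν(A ∩ B ∩ E) · ν(E) = ν(A ∩ E) · ν(B ∩ E) for events A determined by the
coordinates at sites {1, 2, 3, …} and B determined by those at {…, −3, −2, −1}. -/
theorem independence_given_hole_at_zero (p q : ℝ≥0∞) (hp : p ≤ 1) (hq : q ≤ 1)
    (μ : Measure ((ℤ → Bool) × (ℤ → Bool))) [IsProbabilityMeasure μ]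
    (hμ : ∀ (E F : Finset ℤ) (f g : ℤ → Bool),
      μ {ω | (∀ n ∈ E, ω.1 n = f n) ∧ (∀ n ∈ F, ω.2 n = g n)} =
        (∏ n ∈ E, if f n then p else 1 - p) * ∏ n ∈ F, if g n then q else 1 - q)
    (A B : Set (ℤ → Site)) (hAm : MeasurableSet A) (hBm : MeasurableSet B)
    (hA : ∀ x y : ℤ → Site, (∀ n : ℤ, 0 < n → x n = y n) → (x ∈ A ↔ y ∈ A))
    (hB : ∀ x y : ℤ → Site, (∀ n : ℤ, n < 0 → x n = y n) → (x ∈ B ↔ y ∈ B)) :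
    nu μ (A ∩ B ∩ {x | x 0 = Site.empty}) * nu μ {x | x 0 = Site.empty} =
      nu μ (A ∩ {x | x 0 = Site.empty}) * nu μ (B ∩ {x | x 0 = Site.empty}) := by
  classical
  set c : (ℤ → Bool) × (ℤ → Bool) → ℤ → Site := fun ω => collapseZ ω.1 ω.2 with hc
  have hcm : Measurable c := measurable_collapse
  have hEm : MeasurableSet {x : ℤ → Site | x 0 = Site.empty} := by
    have h : {x : ℤ → Site | x 0 = Site.empty} =
        (fun x : ℤ → Site => x 0) ⁻¹' {Site.empty} := by ext x; simp
    rw [h]; exact (measurable_pi_apply 0) (by trivial)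
  set E' : Set ((ℤ → Bool) × (ℤ → Bool)) := c ⁻¹' {x | x 0 = Site.empty} with hE'def
  set A' : Set ((ℤ → Bool) × (ℤ → Bool)) := c ⁻¹' A with hA'def
  set Bt : Set ((ℤ → Bool) × (ℤ → Bool)) := c ⁻¹' B with hBtdef
  set B' : Set ((ℤ → Bool) × (ℤ → Bool)) := (fun ω => c (tMinus ω)) ⁻¹' B with hB'def
  have hA'm : MeasurableSet A' := hcm hAm
  have hE'm : MeasurableSet E' := hcm hEm
  have hB'm : MeasurableSet B' := (hcm.comp measurable_tMinus) hBm
  -- collapse agrees with tPlus-truncated collapse at nonnegative sites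
  have hpos : ∀ ω : (ℤ → Bool) × (ℤ → Bool), ∀ n : ℤ, 0 ≤ n → c (tPlus ω) n = c ω n := by
    intro ω n hn
    apply collapse_congr
    · intro m hm
      simp [tPlus, truncNonneg, show (0:ℤ) ≤ m by omega]
    · intro m hm
      simp [tPlus, truncNonneg, show (0:ℤ) ≤ m by omega]
  have hAEinv : A' ∩ E' = tPlus ⁻¹' (A' ∩ E') := by
    ext ω
    simp only [Set.mem_inter_iff, Set.mem_preimage, hA'def, hE'def, Set.mem_setOf_eq]
    have h1 : c ω ∈ A ↔ c (tPlus ω) ∈ A :=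
      hA (c ω) (c (tPlus ω)) (fun n hn => (hpos ω n hn.le).symm)
    have h2 : c (tPlus ω) 0 = c ω 0 := hpos ω 0 le_rfl
    rw [h1, h2]
  have hEinv : E' = tPlus ⁻¹' E' := by
    ext ω
    simp only [Set.mem_preimage, hE'def, Set.mem_setOf_eq]
    rw [hpos ω 0 le_rfl]
  have hB'inv : B' = tMinus ⁻¹' B' := by
    have htt : ∀ ω, tMinus (tMinus ω) = tMinus ω := by
      intro ω
      have h : ∀ f : ℤ → Bool, truncNeg (truncNeg f) = truncNeg f := by
        intro f; funext n; unfold truncNeg; split_ifs with h <;> simp [h]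
      simp [tMinus, h]
    ext ω
    simp only [Set.mem_preimage, hB'def, Set.mem_setOf_eq, htt]
  -- on E', the collapse agrees with tMinus-truncated collapse at negative sites
  have hBE : Bt ∩ E' = B' ∩ E' := by
    ext ω
    simp only [Set.mem_inter_iff, Set.mem_preimage, hBtdef, hB'def, hE'def, Set.mem_setOf_eq]
    constructor
    · rintro ⟨hb, he⟩
      refine ⟨?_, he⟩
      exact (hB (c ω) (c (tMinus ω)) (fun n hn => collapse_neg_eq he hn)).1 hb
    · rintro ⟨hb, he⟩
      refine ⟨?_, he⟩
      exact (hB (c ω) (c (tMinus ω)) (fun n hn => collapse_neg_eq he hn)).2 hb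
  -- independence
  have hIndep : ProbabilityTheory.Indep
      (MeasurableSpace.generateFrom (cyls {n : ℤ | 0 ≤ n}))
      (MeasurableSpace.generateFrom (cyls {n : ℤ | n < 0})) μ := by
    refine ProbabilityTheory.IndepSets.indep' ?_ ?_ (isPiSystem_cyls _) (isPiSystem_cyls _)
      (indepSets_cyls p q μ hμ)
    · rintro s ⟨E, F, f, g, -, -, rfl⟩; exact measurableSet_cylSet E F f g
    · rintro s ⟨E, F, f, g, -, -, rfl⟩; exact measurableSet_cylSet E F f g
  have hprod := (ProbabilityTheory.Indep_iff _ _ μ).1 hIndep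
  have hU : MeasurableSet[MeasurableSpace.generateFrom (cyls {n : ℤ | 0 ≤ n})] (A' ∩ E') := by
    rw [hAEinv]; exact tPlus_measurable_gen (hA'm.inter hE'm)
  have hUE : MeasurableSet[MeasurableSpace.generateFrom (cyls {n : ℤ | 0 ≤ n})] E' := by
    rw [hEinv]; exact tPlus_measurable_gen hE'm
  have hV : MeasurableSet[MeasurableSpace.generateFrom (cyls {n : ℤ | n < 0})] B' := by
    rw [hB'inv]; exact tMinus_measurable_gen hB'm
  have key1 : μ ((A' ∩ E') ∩ B') = μ (A' ∩ E') * μ B' := hprod _ _ hU hV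
  have key2 : μ (E' ∩ B') = μ E' * μ B' := hprod _ _ hUE hV
  -- rewrite nu in terms of μ
  have hnu : ∀ X : Set (ℤ → Site), MeasurableSet X → nu μ X = μ (c ⁻¹' X) := by
    intro X hX
    simp only [nu, hc]
    exact Measure.map_apply measurable_collapse hX
  rw [hnu _ ((hAm.inter hBm).inter hEm), hnu _ hEm, hnu _ (hAm.inter hEm),
    hnu _ (hBm.inter hEm)]
  have e1 : c ⁻¹' (A ∩ B ∩ {x | x 0 = Site.empty}) = (A' ∩ E') ∩ B' := by
    simp only [Set.preimage_inter, hA'def, hBtdef, hE'def]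
    rw [show c ⁻¹' A ∩ c ⁻¹' B ∩ c ⁻¹' {x | x 0 = Site.empty} =
      (c ⁻¹' A) ∩ ((c ⁻¹' B) ∩ (c ⁻¹' {x | x 0 = Site.empty})) from by
        rw [Set.inter_assoc]]
    rw [show (c ⁻¹' B) ∩ (c ⁻¹' {x | x 0 = Site.empty}) = B' ∩ E' from hBE]
    ext ω; simp only [Set.mem_inter_iff]; tauto
  have e2 : c ⁻¹' (A ∩ {x | x 0 = Site.empty}) = A' ∩ E' := by
    simp only [Set.preimage_inter, hA'def, hE'def]
  have e3 : c ⁻¹' (B ∩ {x | x 0 = Site.empty}) = E' ∩ B' := by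
    simp only [Set.preimage_inter, hBtdef, hE'def]
    rw [show (c ⁻¹' B) ∩ (c ⁻¹' {x | x 0 = Site.empty}) = B' ∩ E' from hBE, Set.inter_comm]
  rw [e1, e2, e3, key1, key2]
  ring
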